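/- For any k ≤ n (so that X_k ⊆ X_n), the orthogonal projection onto N(Q_m A) ∩ X_n satisfies P_k Π_{N(Q_m A)∩X_n} = P_k − A_k* (A_{n,m}*)† and Π_{N(Q_m A)∩X_n} P_k = P_k − A_{n,m}† A_k, where A_k = A P_k. -/

import Mathlib

open ContinuousLinearMap Filter Topology

noncomputable section

/-- Orthogonal projection onto a subspace, as an endomorphism. -/
noncomputable def proj {E : Type*} [NormedAddCommGroup E] [InnerProductSpace ℝ E]
    (K : Submodule ℝ E) [K.HasOrthogonalProjection] : E →L[ℝ] E :=
  K.subtypeL.comp (K.orthogonalProjectionOnto : E →L[ℝ] K)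

/-- The discretized operator `A_{n,m} = Q_m A P_n`. -/
noncomputable def Amn {X Y : Type*} [NormedAddCommGroup X] [InnerProductSpace ℝ X]
    [NormedAddCommGroup Y] [InnerProductSpace ℝ Y]
    (A : X →L[ℝ] Y) (Xn : Submodule ℝ X) (Ym : Submodule ℝ Y)
    [Xn.HasOrthogonalProjection] [Ym.HasOrthogonalProjection] : X →L[ℝ] Y :=
  (proj Ym).comp (A.comp (proj Xn))

/-- `B` is the Moore–Penrose pseudoinverse of `A` (the four Penrose conditions). -/
def IsPseudoinverse {X Y : Type*} [NormedAddCommGroup X] [InnerProductSpace ℝ X]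
    [CompleteSpace X] [NormedAddCommGroup Y] [InnerProductSpace ℝ Y] [CompleteSpace Y]
    (A : X →L[ℝ] Y) (B : Y →L[ℝ] X) : Prop :=
  A.comp (B.comp A) = A ∧ B.comp (A.comp B) = B ∧
  ContinuousLinearMap.adjoint (A.comp B) = A.comp B ∧
  ContinuousLinearMap.adjoint (B.comp A) = B.comp A

section Aux

variable {E F : Type*} [NormedAddCommGroup E] [InnerProductSpace ℝ E]
  [NormedAddCommGroup F] [InnerProductSpace ℝ F]

lemma proj_mem (K : Submodule ℝ E) [K.HasOrthogonalProjection] (x : E) : proj K x ∈ K :=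
  (K.orthogonalProjectionOnto x).2

lemma proj_of_mem (K : Submodule ℝ E) [K.HasOrthogonalProjection] {x : E} (hx : x ∈ K) :
    proj K x = x :=
  Submodule.starProjection_eq_self_iff.mpr hx

lemma proj_comp_proj_of_le {K L : Submodule ℝ E} [K.HasOrthogonalProjection]
    [L.HasOrthogonalProjection] (h : K ≤ L) : (proj L).comp (proj K) = proj K :=
  ContinuousLinearMap.ext fun x => proj_of_mem L (h (proj_mem K x))

lemma proj_comp_proj_of_le' {K L : Submodule ℝ E} [K.HasOrthogonalProjection]
    [L.HasOrthogonalProjection] (h : K ≤ L) : (proj K).comp (proj L) = proj K :=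
  ContinuousLinearMap.ext fun x =>
    congrArg Subtype.val (Submodule.orthogonalProjectionOnto_starProjection_of_le h x)

lemma proj_adjoint [CompleteSpace E] (K : Submodule ℝ E) [CompleteSpace K] :
    ContinuousLinearMap.adjoint (proj K) = proj K :=
  (isSelfAdjoint_starProjection K).adjoint_eq

variable [CompleteSpace E] [CompleteSpace F]

lemma isPseudoinverse_adjoint {M : E →L[ℝ] F} {B : F →L[ℝ] E} (h : IsPseudoinverse M B) :
    IsPseudoinverse (ContinuousLinearMap.adjoint M) (ContinuousLinearMap.adjoint B) := by
  obtain ⟨h1, h2, h3, h4⟩ := h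
  refine ⟨?_, ?_, ?_, ?_⟩
  · rw [← adjoint_comp, ← adjoint_comp, comp_assoc, h1]
  · rw [← adjoint_comp, ← adjoint_comp, comp_assoc, h2]
  · rw [← adjoint_comp, adjoint_adjoint, h4]
  · rw [← adjoint_comp, adjoint_adjoint, h3]

lemma pinv_unique {M : E →L[ℝ] F} {B C : F →L[ℝ] E}
    (hB : IsPseudoinverse M B) (hC : IsPseudoinverse M C) : B = C := by
  obtain ⟨hB1, hB2, hB3, hB4⟩ := hB
  obtain ⟨hC1, hC2, hC3, hC4⟩ := hC
  have e1 : (B.comp M).comp (C.comp M) = B.comp M := by rw [comp_assoc, hC1]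
  have e2 : (C.comp M).comp (B.comp M) = C.comp M := by rw [comp_assoc, hB1]
  have h1 : B.comp M = C.comp M := by
    calc B.comp M = (B.comp M).comp (C.comp M) := e1.symm
      _ = ContinuousLinearMap.adjoint ((C.comp M).comp (B.comp M)) := by
            rw [adjoint_comp, hB4, hC4]
      _ = C.comp M := by rw [e2, hC4]
  have f1 : (M.comp B).comp (M.comp C) = M.comp C := by
    rw [comp_assoc, ← comp_assoc B M C, ← comp_assoc M (B.comp M) C, hB1]
  have f2 : (M.comp C).comp (M.comp B) = M.comp B := by
    rw [comp_assoc, ← comp_assoc C M B, ← comp_assoc M (C.comp M) B, hC1]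
  have h2 : M.comp B = M.comp C := by
    calc M.comp B = (M.comp C).comp (M.comp B) := f2.symm
      _ = ContinuousLinearMap.adjoint ((M.comp B).comp (M.comp C)) := by
            rw [adjoint_comp, hB3, hC3]
      _ = M.comp C := by rw [f1, hC3]
  calc B = B.comp (M.comp B) := hB2.symm
    _ = B.comp (M.comp C) := by rw [h2]
    _ = (B.comp M).comp C := by rw [comp_assoc]
    _ = (C.comp M).comp C := by rw [h1]
    _ = C := by rw [comp_assoc, hC2]

end Aux

/-- for `X_k ⊆ X_n`:
`P_k Π_{N(Q_m A) ⊓ X_n} = P_k − A_k* (A_{n,m}*)†` and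
`Π_{N(Q_m A) ⊓ X_n} P_k = P_k − A_{n,m}† A_k`, where `A_k = A P_k`. -/
theorem stmt_6 {X Y : Type*} [NormedAddCommGroup X] [InnerProductSpace ℝ X] [CompleteSpace X]
    [NormedAddCommGroup Y] [InnerProductSpace ℝ Y] [CompleteSpace Y]
    (A : X →L[ℝ] Y) (Xk Xn : Submodule ℝ X) (Ym : Submodule ℝ Y)
    [FiniteDimensional ℝ Xk] [FiniteDimensional ℝ Xn] [FiniteDimensional ℝ Ym]
    (hkn : Xk ≤ Xn)
    (Adag : Y →L[ℝ] X) (hdag : IsPseudoinverse (Amn A Xn Ym) Adag)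
    (Adags : X →L[ℝ] Y)
    (hdags : IsPseudoinverse (ContinuousLinearMap.adjoint (Amn A Xn Ym)) Adags) :
    (_root_.proj Xk).comp (_root_.proj (LinearMap.ker (((_root_.proj Ym).comp A : X →L[ℝ] Y) : X →ₗ[ℝ] Y) ⊓ Xn))
      = _root_.proj Xk - (ContinuousLinearMap.adjoint (A.comp (_root_.proj Xk))).comp Adags ∧
    (_root_.proj (LinearMap.ker (((_root_.proj Ym).comp A : X →L[ℝ] Y) : X →ₗ[ℝ] Y) ⊓ Xn)).comp (_root_.proj Xk)
      = _root_.proj Xk - Adag.comp (A.comp (_root_.proj Xk)) := by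
  obtain ⟨h1, h2, h3, h4⟩ := hdag
  set M := Amn A Xn Ym with hMdef
  set N := LinearMap.ker (((_root_.proj Ym).comp A : X →L[ℝ] Y) : X →ₗ[ℝ] Y) ⊓ Xn with hNdef
  have hMadj : ContinuousLinearMap.adjoint M = (_root_.proj Xn).comp
      ((ContinuousLinearMap.adjoint A).comp (_root_.proj Ym)) := by
    rw [hMdef, Amn, adjoint_comp, adjoint_comp, proj_adjoint, proj_adjoint, comp_assoc]
  have hMPn : M.comp (_root_.proj Xn) = M := by
    rw [hMdef, Amn, comp_assoc, comp_assoc, proj_comp_proj_of_le le_rfl]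
  have hMadjQ : (ContinuousLinearMap.adjoint M).comp (_root_.proj Ym)
      = ContinuousLinearMap.adjoint M := by
    rw [hMadj, comp_assoc, comp_assoc, proj_comp_proj_of_le le_rfl]
  have hPnMadj : (_root_.proj Xn).comp (ContinuousLinearMap.adjoint M)
      = ContinuousLinearMap.adjoint M := by
    conv_lhs => rw [hMadj]
    rw [← comp_assoc, proj_comp_proj_of_le le_rfl, ← hMadj]
  have hMAQ : (M.comp Adag).comp (_root_.proj Ym) = M.comp Adag := by
    conv_lhs => rw [← h3, adjoint_comp]
    rw [comp_assoc, hMadjQ, ← adjoint_comp, h3]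
  have hPnAM : (_root_.proj Xn).comp (Adag.comp M) = Adag.comp M := by
    conv_lhs => rw [← h4, adjoint_comp]
    rw [← comp_assoc, hPnMadj, ← adjoint_comp, h4]
  have hAdagQ : Adag.comp (_root_.proj Ym) = Adag := by
    calc Adag.comp (_root_.proj Ym)
        = (Adag.comp (M.comp Adag)).comp (_root_.proj Ym) := by rw [h2]
      _ = Adag.comp ((M.comp Adag).comp (_root_.proj Ym)) := by rw [comp_assoc]
      _ = Adag := by rw [hMAQ, h2]
  have hPnAdag : (_root_.proj Xn).comp Adag = Adag := by
    calc (_root_.proj Xn).comp Adag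
        = (_root_.proj Xn).comp ((Adag.comp M).comp Adag) := by rw [comp_assoc, h2]
      _ = ((_root_.proj Xn).comp (Adag.comp M)).comp Adag := by rw [comp_assoc, comp_assoc, ← comp_assoc Adag M Adag]
      _ = Adag := by rw [hPnAM, comp_assoc, h2]
  have hAdagMem : ∀ y : Y, Adag y ∈ Xn := by
    intro y
    have := DFunLike.congr_fun hPnAdag y
    simp only [comp_apply] at this
    rw [← this]
    exact proj_mem Xn _
  have hMN : ∀ z : X, z ∈ N → M z = 0 := by
    intro z hz
    obtain ⟨hz1, hz2⟩ := hz
    have hfix : (_root_.proj Xn) z = z := proj_of_mem Xn hz2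
    simp only [hMdef, Amn, comp_apply, hfix]
    simpa [comp_apply] using hz1
  have hcentral : _root_.proj N = _root_.proj Xn - Adag.comp M := by
    ext x
    rw [ContinuousLinearMap.sub_apply, comp_apply]
    show (N.orthogonalProjectionOnto x : X) = _root_.proj Xn x - Adag (M x)
    apply Submodule.eq_starProjection_of_mem_orthogonal
    · have hmem : _root_.proj Xn x - Adag (M x) ∈ Xn :=
        Submodule.sub_mem Xn (proj_mem Xn x) (hAdagMem _)
      constructor
      · show ((_root_.proj Ym).comp A) (_root_.proj Xn x - Adag (M x)) = 0
        have hfix : (_root_.proj Xn) (_root_.proj Xn x - Adag (M x))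
            = _root_.proj Xn x - Adag (M x) := proj_of_mem Xn hmem
        have hQA : ((_root_.proj Ym).comp A) (_root_.proj Xn x - Adag (M x))
            = M (_root_.proj Xn x - Adag (M x)) := by
          show (_root_.proj Ym) (A (_root_.proj Xn x - Adag (M x)))
              = (_root_.proj Ym) (A ((_root_.proj Xn) (_root_.proj Xn x - Adag (M x))))
          rw [hfix]
        rw [hQA, map_sub]
        have e1 : M (_root_.proj Xn x) = M x := by
          simpa only [comp_apply] using DFunLike.congr_fun hMPn x
        have e2 : M (Adag (M x)) = M x := by
          simpa only [comp_apply] using DFunLike.congr_fun h1 x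
        rw [e1, e2, sub_self]
      · exact hmem
    · have hsplit : x - (_root_.proj Xn x - Adag (M x))
          = (x - _root_.proj Xn x) + Adag (M x) := by abel
      rw [hsplit]
      refine Submodule.add_mem _ ?_ ?_
      · exact Submodule.orthogonal_le inf_le_right
          (Submodule.sub_starProjection_mem_orthogonal x)
      · rw [Submodule.mem_orthogonal]
        intro z hz
        have hAM : Adag (M x) = (Adag.comp M) x := rfl
        rw [hAM, real_inner_comm]
        calc (inner ℝ ((Adag.comp M) x) z : ℝ)
            = inner ℝ ((ContinuousLinearMap.adjoint (Adag.comp M)) x) z := by rw [h4]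
          _ = inner ℝ x ((Adag.comp M) z) := adjoint_inner_left _ _ _
          _ = 0 := by rw [comp_apply, hMN z hz]; simp
  have hstmt2 : (_root_.proj N).comp (_root_.proj Xk)
      = _root_.proj Xk - Adag.comp (A.comp (_root_.proj Xk)) := by
    rw [hcentral, ContinuousLinearMap.sub_comp, proj_comp_proj_of_le hkn]
    congr 1
    rw [comp_assoc, hMdef]
    show Adag.comp ((Amn A Xn Ym).comp (_root_.proj Xk))
        = Adag.comp (A.comp (_root_.proj Xk))
    rw [Amn, comp_assoc, comp_assoc, proj_comp_proj_of_le hkn, ← comp_assoc,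
      ← comp_assoc, hAdagQ, comp_assoc]
  refine ⟨?_, hstmt2⟩
  have hAdags : Adags = ContinuousLinearMap.adjoint Adag :=
    pinv_unique hdags (isPseudoinverse_adjoint ⟨h1, h2, h3, h4⟩)
  have hadj := congrArg ContinuousLinearMap.adjoint hstmt2
  rw [adjoint_comp, proj_adjoint, proj_adjoint, map_sub, proj_adjoint, adjoint_comp] at hadj
  rw [hadj, hAdags]
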